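/- For each N ≥ 2 let F_N be an isotropic random continuous field on S^N which is P-almost surely nonnegative, and suppose there is K > 0 with E[F_N(𝐧)] ≤ K·√N for all N. Assume there exists α > 0 such that: (1) for every c, δ > 0 there exist c₁ > 0 and C₁ > 0 with P( |F_N(𝐧) − E[F_N(𝐧)]| ≥ c·N^{1/2+δ} ) ≤ C₁·exp(−c₁·N^{1+2δ}) for all N; and (2') for every c, δ > 0 there exist c₂ > 0 and C₂ > 0 with P( sup{ |F_N(x)² − F_N(y)²| : x, y ∈ S^N, R(x,y) ≥ 1 − N^{−α} } ≥ c·N^{1+2δ} ) ≤ C₂·exp(−c₂·N^{1+2δ}) for all N. Then for every c, δ > 0 there exist f > 0 and C > 0 such that for all N, P( sup_{x ∈ S^N} F_N(x) ≥ c·N^{1/2+δ} ) ≤ C·exp(−f·N^{1+2δ}). -/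

import Mathlib

open MeasureTheory

/-- The sphere `S^N` of radius `√N` in `ℝ^N`. -/
noncomputable def sphereN (N : ℕ) : Set (EuclideanSpace ℝ (Fin N)) :=
  Metric.sphere (0 : EuclideanSpace ℝ (Fin N)) (Real.sqrt N)

/-- The north pole `𝐧 = (√N, 0, …, 0) ∈ S^N`. -/
noncomputable def nPole (N : ℕ) (hN : 0 < N) : sphereN N :=
  ⟨EuclideanSpace.single (⟨0, hN⟩ : Fin N) (Real.sqrt N), by
    simp [sphereN, mem_sphere_iff_norm, EuclideanSpace.norm_single,
      abs_of_nonneg (Real.sqrt_nonneg (N : ℝ))]⟩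

/-- A linear isometry (in particular, an orthogonal map) of `ℝ^N` restricted to the
sphere `S^N`. -/
noncomputable def sphereMap {N : ℕ}
    (O : EuclideanSpace ℝ (Fin N) ≃ₗᵢ[ℝ] EuclideanSpace ℝ (Fin N)) (x : sphereN N) :
    sphereN N :=
  ⟨O x, by
    have hx : ‖(x : EuclideanSpace ℝ (Fin N))‖ = Real.sqrt N := by
      simpa [sphereN, mem_sphere_iff_norm] using x.2
    simp [sphereN, mem_sphere_iff_norm, O.norm_map, hx]⟩

/-- The overlap `R(x,y) = (1/N) Σᵢ xᵢ yᵢ` of two points of `S^N`. -/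
noncomputable def overlap {N : ℕ} (x y : sphereN N) : ℝ :=
  (inner ℝ (x : EuclideanSpace ℝ (Fin N)) (y : EuclideanSpace ℝ (Fin N)) : ℝ) / N

/-!
Cover `S^N` by a net whose points have overlap at least `1 - N^{-α}` with every point of the
sphere; a packing (volume) argument gives one of size `(3 N^{α/2})^N = exp(O(N log N))`, which is
negligible against `exp(c₁ N^{1+2δ})`. By isotropy `F_N` has the same law at every net point as at
`𝐧`, so by (1) and a union bound, off a small event, `0 ≤ F_N ≤ E F_N(𝐧) + (c/2) N^{1/2+δ}
≤ (3/4) c N^{1/2+δ}` on the whole net. Off the event of (2'), every point lies near a net point,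
hence `F_N² ≤ (9/16 + 1/4) c² N^{1+2δ} < c² N^{1+2δ}` everywhere. Finitely many small `N` are
absorbed into the constant.
-/

open Filter Metric Module ProbabilityTheory Real
open scoped ENNReal NNReal

section Packing

variable {E : Type*} [NormedAddCommGroup E] [NormedSpace ℝ E] [FiniteDimensional ℝ E]

theorem Metric.IsSeparated.card_le {ε : ℝ≥0} (hε : 0 < ε) {r : ℝ} (hr : 0 ≤ r) {T : Finset E}
    (hT : (T : Set E) ⊆ closedBall 0 r) (hsep : IsSeparated ε (T : Set E)) :
    (T.card : ℝ) ≤ (1 + 2 * r / ε) ^ finrank ℝ E := by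
  let _ : MeasurableSpace E := borel E
  have : BorelSpace E := ⟨rfl⟩
  set μ : Measure E := Measure.addHaar
  set ρ : ℝ := ε / 2
  have hρ : 0 < ρ := by positivity
  have hdisj : (T : Set E).PairwiseDisjoint (ball · ρ) := fun a ha b hb hab =>
    ball_disjoint_ball <| by
      have h : (ε : ℝ≥0∞) < edist a b := hsep ha hb hab
      rw [edist_nndist, ENNReal.coe_lt_coe, ← NNReal.coe_lt_coe, coe_nndist] at h
      linarith [show ρ + ρ = ε by simp only [ρ]; ring]
  have hsub : (⋃ t ∈ T, ball t ρ) ⊆ ball 0 (r + ρ) := by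
    refine Set.iUnion₂_subset fun t ht x hx => ?_
    have := hT ht
    rw [mem_closedBall] at this; rw [mem_ball] at hx ⊢
    linarith [dist_triangle x t 0]
  have hvol : (T.card : ℝ≥0∞) * ENNReal.ofReal (ρ ^ finrank ℝ E)
      ≤ ENNReal.ofReal ((r + ρ) ^ finrank ℝ E) := by
    have h0 : μ (ball 0 1) ≠ 0 := (measure_ball_pos μ 0 one_pos).ne'
    have htop : μ (ball 0 1) ≠ ⊤ := measure_ball_lt_top.ne
    rw [← ENNReal.mul_le_mul_iff_left h0 htop]
    calc (T.card : ℝ≥0∞) * ENNReal.ofReal (ρ ^ finrank ℝ E) * μ (ball 0 1)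
        = ∑ t ∈ T, μ (ball t ρ) := by
          simp only [Measure.addHaar_ball_of_pos μ _ hρ, Finset.sum_const, nsmul_eq_mul, mul_assoc]
      _ = μ (⋃ t ∈ T, ball t ρ) := (measure_biUnion_finset hdisj fun _ _ => measurableSet_ball).symm
      _ ≤ μ (ball 0 (r + ρ)) := measure_mono hsub
      _ = _ := Measure.addHaar_ball_of_pos μ _ (by positivity)
  have := ENNReal.toReal_mono ENNReal.ofReal_ne_top hvol
  rw [ENNReal.toReal_mul, ENNReal.toReal_ofReal (by positivity),
    ENNReal.toReal_ofReal (by positivity), ENNReal.toReal_natCast] at this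
  calc (T.card : ℝ) = T.card * ρ ^ finrank ℝ E / ρ ^ finrank ℝ E := by field_simp
    _ ≤ (r + ρ) ^ finrank ℝ E / ρ ^ finrank ℝ E := by gcongr
    _ = _ := by rw [← div_pow]; congr 1; simp only [ρ]; field_simp; ring

theorem Metric.exists_finset_isCover_card_le {ε : ℝ≥0} (hε : 0 < ε) {r : ℝ} (hr : 0 ≤ r)
    {A : Set E} (hA : A ⊆ closedBall 0 r) :
    ∃ T : Finset E, (T : Set E) ⊆ A ∧ IsCover ε A T ∧
      (T.card : ℝ) ≤ (1 + 2 * r / ε) ^ finrank ℝ E := by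
  -- A maximal `ε`-separated subset of `A` is an `ε`-cover; it exists once the packing number
  -- is finite, which the volume bound forces.
  have hpack : packingNumber ε A ≠ ⊤ := by
    refine ne_top_of_le_ne_top (ENat.natCast_ne_top ⌊(1 + 2 * r / ε) ^ finrank ℝ E⌋₊) ?_
    refine iSup₂_le fun C hCA => iSup_le fun hC => ?_
    by_contra! hlt
    obtain ⟨C', hC'C, hC'card⟩ := Set.exists_subset_encard_eq (Order.add_one_le_of_lt hlt)
    have hfin : C'.Finite := Set.finite_of_encard_eq_coe hC'card
    have hcard : (hfin.toFinset.card : ℝ) ≤ (1 + 2 * r / ε) ^ finrank ℝ E :=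
      IsSeparated.card_le hε hr (by simpa using hC'C.trans (hCA.trans hA))
        (by simpa using hC.subset hC'C)
    rw [hfin.encard_eq_coe_toFinset_card] at hC'card
    have : hfin.toFinset.card = ⌊(1 + 2 * r / ε) ^ finrank ℝ E⌋₊ + 1 := by exact_mod_cast hC'card
    rw [this, Nat.cast_add_one] at hcard
    exact (Nat.lt_floor_add_one _).not_ge hcard
  have hfin : (maximalSeparatedSet ε A).Finite :=
    Set.encard_ne_top_iff.mp (encard_maximalSeparatedSet hpack ▸ hpack)
  refine ⟨hfin.toFinset, by simpa using maximalSeparatedSet_subset, by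
    simpa using isCover_maximalSeparatedSet hpack, ?_⟩
  exact IsSeparated.card_le hε hr (by simpa using maximalSeparatedSet_subset.trans hA)
    (by simpa using isSeparated_maximalSeparatedSet)

end Packing

namespace sphereN

variable {N : ℕ}

theorem norm_coe (x : sphereN N) : ‖(x : EuclideanSpace ℝ (Fin N))‖ = √N := by
  simpa [sphereN] using x.2

instance : CompactSpace (sphereN N) := isCompact_iff_compactSpace.mp (isCompact_sphere _ _)

theorem dist_sq_eq (hN : 0 < N) (x y : sphereN N) :
    dist x y ^ 2 = 2 * N * (1 - overlap x y) := by
  have hN' : (N : ℝ) ≠ 0 := by positivity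
  rw [Subtype.dist_eq, dist_eq_norm, norm_sub_sq_real, norm_coe, norm_coe, overlap,
    sq_sqrt (Nat.cast_nonneg N)]
  field_simp
  ring

theorem exists_finset_overlap_net (hN : 0 < N) {θ : ℝ} (hθ : 0 < θ) (hθ₁ : θ ≤ 1) :
    ∃ T : Finset (sphereN N), (∀ x, ∃ t ∈ T, 1 - θ ≤ overlap x t) ∧
      (T.card : ℝ) ≤ (3 / √θ) ^ N := by
  classical
  -- By `dist_sq_eq`, distance `√(2Nθ)` on `S^N` is overlap `1 - θ`.
  set ε : ℝ≥0 := (√(2 * N * θ)).toNNReal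
  have hε : (ε : ℝ) = √(2 * N * θ) := Real.coe_toNNReal _ (sqrt_nonneg _)
  have hεpos : 0 < ε := by rw [← NNReal.coe_pos, hε]; positivity
  obtain ⟨T, hTA, hcover, hcard⟩ :=
    exists_finset_isCover_card_le hεpos (sqrt_nonneg N) (A := sphereN N)
      sphere_subset_closedBall
  refine ⟨T.subtype (· ∈ sphereN N), fun x => ?_, ?_⟩
  · obtain ⟨t, htT, hxt⟩ := hcover x.2
    refine ⟨⟨t, hTA htT⟩, by simpa using htT, ?_⟩
    have hdist : dist x ⟨t, hTA htT⟩ ≤ ε := by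
      rw [Subtype.dist_eq, ← coe_nndist, NNReal.coe_le_coe, ← edist_le_coe]; exact hxt
    have hsq : 2 * N * (1 - overlap x ⟨t, hTA htT⟩) ≤ 2 * N * θ := by
      rw [← dist_sq_eq hN, ← sq_sqrt (by positivity : 0 ≤ 2 * (N : ℝ) * θ), ← hε]
      gcongr
    have : (0 : ℝ) < 2 * N := by positivity
    nlinarith
  · rw [Finset.card_subtype, Finset.filter_true_of_mem fun t ht => hTA ht]
    refine hcard.trans (le_of_eq_of_le (by rw [finrank_euclideanSpace_fin]) ?_)
    gcongr
    have hsqrt : √(2 * N * θ) = √2 * √N * √θ := by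
      rw [sqrt_mul (by positivity), sqrt_mul (by positivity)]
    have hθ' : √θ ≤ 1 := sqrt_le_one.mpr hθ₁
    have h2 : 1 ≤ √2 := one_le_sqrt.mpr (by norm_num)
    have hθpos : 0 < √θ := sqrt_pos.mpr hθ
    have hNpos : 0 < √(N : ℝ) := sqrt_pos.mpr (by exact_mod_cast hN)
    rw [hε, hsqrt]
    field_simp
    nlinarith [mul_le_mul_of_nonneg_left hθ' (by positivity : (0 : ℝ) ≤ √2)]

theorem exists_sphereMap_eq (x y : sphereN N) : ∃ O, sphereMap O x = y :=
  ⟨(ℝ ∙ ((x : EuclideanSpace ℝ (Fin N)) - y))ᗮ.reflection,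
    Subtype.ext (Submodule.reflection_sub (by rw [norm_coe, norm_coe]))⟩

theorem identDistrib_eval_of_isotropic {Ω : Type*} [MeasurableSpace Ω] {μ : Measure Ω}
    {F : Ω → sphereN N → ℝ} (hmeas : Measurable F)
    (hiso : ∀ O : EuclideanSpace ℝ (Fin N) ≃ₗᵢ[ℝ] EuclideanSpace ℝ (Fin N),
      Measure.map (fun ω x => F ω (sphereMap O x)) μ = Measure.map F μ)
    (x y : sphereN N) :
    IdentDistrib (fun ω => F ω x) (fun ω => F ω y) μ μ := by
  obtain ⟨O, hO⟩ := exists_sphereMap_eq y x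
  have hrot : IdentDistrib (fun ω x => F ω (sphereMap O x)) F μ μ :=
    ⟨(measurable_pi_lambda _ fun x => (measurable_pi_apply _).comp hmeas).aemeasurable,
      hmeas.aemeasurable, hiso O⟩
  simpa [Function.comp_def, hO] using hrot.comp (measurable_pi_apply y)

end sphereN

theorem iSup_lt_of_forall_near {X : Type*} [TopologicalSpace X] [CompactSpace X] [Nonempty X]
    {g : X → ℝ} (hg : Continuous g) (near : X → X → Prop) {T : Set X}
    (hT : ∀ x, ∃ t ∈ T, near x t) {e d a : ℝ} (hgT : ∀ t ∈ T, 0 ≤ g t ∧ g t ≤ e)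
    (hosc : sSup {r | ∃ x y, near x y ∧ r = |g x ^ 2 - g y ^ 2|} < d) (ha : 0 < a)
    (hbudget : e ^ 2 + d ≤ a ^ 2) :
    ⨆ x, g x < a := by
  set S := {r | ∃ x y, near x y ∧ r = |g x ^ 2 - g y ^ 2|}
  have hS : BddAbove S := by
    have hcont : Continuous fun p : X × X => |g p.1 ^ 2 - g p.2 ^ 2| := by fun_prop
    exact (isCompact_range hcont).bddAbove.mono (by rintro _ ⟨x, y, -, rfl⟩; exact ⟨(x, y), rfl⟩)
  have hsq : ∀ x, g x ^ 2 ≤ e ^ 2 + sSup S := fun x => by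
    obtain ⟨t, ht, hxt⟩ := hT x
    have hosc_xt : |g x ^ 2 - g t ^ 2| ≤ sSup S := le_csSup hS ⟨x, t, hxt, rfl⟩
    have hgt : g t ^ 2 ≤ e ^ 2 := pow_le_pow_left₀ (hgT t ht).1 (hgT t ht).2 2
    linarith [le_abs_self (g x ^ 2 - g t ^ 2)]
  calc ⨆ x, g x ≤ √(e ^ 2 + sSup S) := ciSup_le fun x => le_sqrt_of_sq_le (hsq x)
    _ < a := (sqrt_lt' ha).2 (by linarith)

theorem measure_le_iSup_le_of_overlap_net {N : ℕ} (hN : 0 < N) {Ω : Type*} [MeasurableSpace Ω]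
    {μ : Measure Ω} {F : Ω → sphereN N → ℝ} (hcont : ∀ ω, Continuous (F ω))
    (hmeas : Measurable F)
    (hiso : ∀ O : EuclideanSpace ℝ (Fin N) ≃ₗᵢ[ℝ] EuclideanSpace ℝ (Fin N),
      Measure.map (fun ω x => F ω (sphereMap O x)) μ = Measure.map F μ)
    (hnonneg : ∀ᵐ ω ∂μ, ∀ x, 0 ≤ F ω x) {θ a b d e : ℝ} {T : Finset (sphereN N)}
    (hT : ∀ x, ∃ t ∈ T, 1 - θ ≤ overlap x t) (ha : 0 < a)
    (hmean : (∫ ω, F ω (nPole N hN) ∂μ) + b ≤ e) (hbudget : e ^ 2 + d ≤ a ^ 2) :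
    μ {ω | a ≤ ⨆ x, F ω x} ≤
      T.card * μ {ω | b ≤ |F ω (nPole N hN) - ∫ ω', F ω' (nPole N hN) ∂μ|} +
        μ {ω | d ≤ sSup {r | ∃ x y, 1 - θ ≤ overlap x y ∧ r = |F ω x ^ 2 - F ω y ^ 2|}} := by
  set m := ∫ ω, F ω (nPole N hN) ∂μ
  set oscillating :=
    {ω | d ≤ sSup {r | ∃ x y, 1 - θ ≤ overlap x y ∧ r = |F ω x ^ 2 - F ω y ^ 2|}}
  have : Nonempty (sphereN N) := ⟨nPole N hN⟩
  have hsub : {ω | a ≤ ⨆ x, F ω x} ⊆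
      {ω | ¬∀ x, 0 ≤ F ω x} ∪ ((⋃ t ∈ T, {ω | b ≤ |F ω t - m|}) ∪ oscillating) := by
    intro ω hω
    by_contra h
    simp only [oscillating, Set.mem_union, Set.mem_iUnion, Set.mem_ofPred_eq, not_or,
      not_exists, not_le, not_not] at h
    obtain ⟨h0, hnet, hosc⟩ := h
    refine hω.not_gt <|
      iSup_lt_of_forall_near (hcont ω) _ hT (fun t ht => ⟨h0 t, ?_⟩) hosc ha hbudget
    linarith [le_abs_self (F ω t - m), hnet t ht]
  have hlaw : ∀ t, μ {ω | b ≤ |F ω t - m|} = μ {ω | b ≤ |F ω (nPole N hN) - m|} := fun t =>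
    (sphereN.identDistrib_eval_of_isotropic hmeas hiso t (nPole N hN)).measure_mem_eq
      (s := {r | b ≤ |r - m|}) (measurableSet_le measurable_const (by fun_prop))
  calc μ {ω | a ≤ ⨆ x, F ω x}
      ≤ μ {ω | ¬∀ x, 0 ≤ F ω x} + (μ (⋃ t ∈ T, {ω | b ≤ |F ω t - m|}) + μ oscillating) :=
        (measure_mono hsub).trans <|
          (measure_union_le _ _).trans (add_le_add le_rfl (measure_union_le _ _))
    _ ≤ 0 + (∑ t ∈ T, μ {ω | b ≤ |F ω t - m|} + μ oscillating) := by
        rw [← ae_iff.mp hnonneg]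
        gcongr
        exact measure_biUnion_finset_le _ _
    _ = _ := by simp only [hlaw, Finset.sum_const, nsmul_eq_mul, zero_add]

theorem eventually_mul_sqrt_le_mul_rpow (K : ℝ) {κ δ : ℝ} (hκ : 0 < κ) (hδ : 0 < δ) :
    ∀ᶠ N : ℕ in atTop, K * √N ≤ κ * (N : ℝ) ^ ((1 : ℝ) / 2 + δ) := by
  filter_upwards [((tendsto_rpow_atTop hδ).comp tendsto_natCast_atTop_atTop).eventually_ge_atTop
    (K / κ), eventually_gt_atTop 0] with N hK hN
  have hN' : (0 : ℝ) < N := by exact_mod_cast hN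
  rw [rpow_add hN', sqrt_eq_rpow, mul_comm _ (_ ^ δ), ← mul_assoc]
  rw [Function.comp_apply, div_le_iff₀ hκ] at hK
  gcongr
  linarith

theorem eventually_three_div_sqrt_rpow_pow_le (α : ℝ) {κ δ : ℝ} (hκ : 0 < κ) (hδ : 0 < δ) :
    ∀ᶠ N : ℕ in atTop,
      (3 / √((N : ℝ) ^ (-α))) ^ N ≤ exp (κ * (N : ℝ) ^ ((1 : ℝ) + 2 * δ)) := by
  have hlog : (fun x => log 3 + α / 2 * log x) =o[atTop] fun x : ℝ => x ^ (2 * δ) :=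
    (Asymptotics.isLittleO_const_left.2 <| Or.inr <| tendsto_norm_atTop_atTop.comp
      (tendsto_rpow_atTop (by positivity))).add
      ((isLittleO_log_rpow_atTop (by positivity)).const_mul_left _)
  filter_upwards [tendsto_natCast_atTop_atTop.eventually (hlog.bound hκ), eventually_gt_atTop 0]
    with N hbound hN
  have hN' : (0 : ℝ) < N := by exact_mod_cast hN
  have hbase : log (3 / √((N : ℝ) ^ (-α))) = log 3 + α / 2 * log N := by
    rw [log_div (by norm_num) (by positivity), log_sqrt (by positivity), log_rpow hN']
    ring
  rw [← exp_log (by positivity : (0 : ℝ) < (3 / √((N : ℝ) ^ (-α))) ^ N), log_pow, hbase,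
    exp_le_exp, add_comm (1 : ℝ), rpow_add_one hN'.ne']
  rw [norm_of_nonneg (by positivity : (0 : ℝ) ≤ (N : ℝ) ^ (2 * δ))] at hbound
  nlinarith [le_norm_self (log 3 + α / 2 * log N)]

theorem exists_forall_le_of_eventually_le {p : ℕ → ℝ≥0∞} (hp : ∀ n, p n ≤ 1) {L : ℕ → ℝ}
    {f C : ℝ} (hC : 0 < C) (h : ∀ᶠ n in atTop, p n ≤ ENNReal.ofReal (C * exp (-f * L n))) :
    ∃ C' > 0, ∀ n, p n ≤ ENNReal.ofReal (C' * exp (-f * L n)) := by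
  obtain ⟨n₀, hn₀⟩ := eventually_atTop.1 h
  have hsum : 0 ≤ ∑ n ∈ Finset.range n₀, exp (f * L n) := by positivity
  refine ⟨C + ∑ n ∈ Finset.range n₀, exp (f * L n), by positivity, fun n => ?_⟩
  rcases le_or_gt n₀ n with hn | hn
  · exact (hn₀ n hn).trans (ENNReal.ofReal_le_ofReal (by gcongr; linarith))
  · refine (hp n).trans (ENNReal.one_le_ofReal.2 ?_)
    have hterm : exp (f * L n) ≤ ∑ n ∈ Finset.range n₀, exp (f * L n) :=
      Finset.single_le_sum (f := fun n => exp (f * L n)) (fun _ _ => (exp_pos _).le)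
        (Finset.mem_range.2 hn)
    calc (1 : ℝ) = exp (f * L n) * exp (-f * L n) := by rw [← exp_add]; simp
      _ ≤ _ := by gcongr; linarith

theorem natCast_mul_ofReal_add_ofReal_le {n : ℕ} {C₁ C₂ c₁ c₂ L : ℝ}
    (hn : (n : ℝ) ≤ exp (c₁ / 2 * L)) (hC₁ : 0 ≤ C₁) (hC₂ : 0 ≤ C₂) (hL : 0 ≤ L) :
    n * ENNReal.ofReal (C₁ * exp (-c₁ * L)) + ENNReal.ofReal (C₂ * exp (-c₂ * L)) ≤
      ENNReal.ofReal ((C₁ + C₂) * exp (-min (c₁ / 2) c₂ * L)) := by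
  rw [← ENNReal.ofReal_natCast, ← ENNReal.ofReal_mul (Nat.cast_nonneg _),
    ← ENNReal.ofReal_add (by positivity) (by positivity)]
  refine ENNReal.ofReal_le_ofReal ?_
  have h₁ : n * (C₁ * exp (-c₁ * L)) ≤ C₁ * exp (-min (c₁ / 2) c₂ * L) :=
    calc n * (C₁ * exp (-c₁ * L)) ≤ exp (c₁ / 2 * L) * (C₁ * exp (-c₁ * L)) := by gcongr
      _ = C₁ * exp (-(c₁ / 2) * L) := by rw [mul_left_comm, ← exp_add]; ring_nf
      _ ≤ C₁ * exp (-min (c₁ / 2) c₂ * L) := by gcongr; exact min_le_left _ _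
  have h₂ : C₂ * exp (-c₂ * L) ≤ C₂ * exp (-min (c₁ / 2) c₂ * L) := by
    gcongr; exact min_le_right _ _
  linarith

/-- **From pointwise concentration and continuity to a uniform bound (nonnegative
case).** If `F_N` is an a.s. nonnegative isotropic random continuous field on `S^N`
with `E[F_N(𝐧)] ≤ K√N`, which (1) concentrates at scale `N^{1/2+δ}` at the north pole
and (2') has a modulus-of-continuity bound for `F_N²` at scale `N^{1+2δ}` on pairs of
points with overlap at least `1 − N^{−α}`, then
`P(sup_{S^N} F_N ≥ c N^{1/2+δ}) ≤ C exp(−f N^{1+2δ})`. -/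
theorem isotropic_field_uniform_bound_nonneg
    (Ω : ℕ → Type) (m : ∀ N, MeasurableSpace (Ω N)) (μ : ∀ N, Measure (Ω N))
    (hprob : ∀ N, IsProbabilityMeasure (μ N))
    (F : ∀ N, Ω N → sphereN N → ℝ)
    (hcont : ∀ N ω, Continuous (F N ω))
    (hmeas : ∀ N, Measurable (F N))
    (hiso : ∀ N (O : EuclideanSpace ℝ (Fin N) ≃ₗᵢ[ℝ] EuclideanSpace ℝ (Fin N)),
      Measure.map (fun ω x => F N ω (sphereMap O x)) (μ N) = Measure.map (F N) (μ N))
    (hnonneg : ∀ N, ∀ᵐ ω ∂μ N, ∀ x, 0 ≤ F N ω x)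
    (K : ℝ)
    (hmean : ∀ N, ∀ hN : 2 ≤ N,
      (∫ ω, F N ω (nPole N (by omega)) ∂μ N) ≤ K * Real.sqrt N)
    (α : ℝ) (hα : 0 < α)
    (hpoint : ∀ c > (0 : ℝ), ∀ δ > (0 : ℝ), ∃ c₁ > (0 : ℝ), ∃ C₁ > (0 : ℝ),
      ∀ N, ∀ hN : 2 ≤ N,
        μ N {ω | c * (N : ℝ) ^ ((1 : ℝ) / 2 + δ) ≤
            |F N ω (nPole N (by omega)) - ∫ ω', F N ω' (nPole N (by omega)) ∂μ N|}
          ≤ ENNReal.ofReal (C₁ * Real.exp (-c₁ * (N : ℝ) ^ ((1 : ℝ) + 2 * δ))))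
    (hmodsq : ∀ c > (0 : ℝ), ∀ δ > (0 : ℝ), ∃ c₂ > (0 : ℝ), ∃ C₂ > (0 : ℝ),
      ∀ N, 2 ≤ N →
        μ N {ω | c * (N : ℝ) ^ ((1 : ℝ) + 2 * δ) ≤
            sSup {r : ℝ | ∃ x y : sphereN N,
              1 - (N : ℝ) ^ (-α) ≤ overlap x y ∧
              r = |(F N ω x) ^ 2 - (F N ω y) ^ 2|}}
          ≤ ENNReal.ofReal (C₂ * Real.exp (-c₂ * (N : ℝ) ^ ((1 : ℝ) + 2 * δ)))) :
    ∀ c > (0 : ℝ), ∀ δ > (0 : ℝ), ∃ f > (0 : ℝ), ∃ C > (0 : ℝ),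
      ∀ N, 2 ≤ N →
        μ N {ω | c * (N : ℝ) ^ ((1 : ℝ) / 2 + δ) ≤ ⨆ x : sphereN N, F N ω x}
          ≤ ENNReal.ofReal (C * Real.exp (-f * (N : ℝ) ^ ((1 : ℝ) + 2 * δ))) := by
  intro c hc δ hδ
  obtain ⟨c₁, hc₁, C₁, hC₁, hpoint⟩ := hpoint (c / 2) (by positivity) δ hδ
  obtain ⟨c₂, hc₂, C₂, hC₂, hmodsq⟩ := hmodsq (c ^ 2 / 4) (by positivity) δ hδ
  suffices ∀ᶠ N in atTop, μ N {ω | c * (N : ℝ) ^ ((1 : ℝ) / 2 + δ) ≤ ⨆ x, F N ω x} ≤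
      ENNReal.ofReal ((C₁ + C₂) * exp (-min (c₁ / 2) c₂ * (N : ℝ) ^ ((1 : ℝ) + 2 * δ))) by
    obtain ⟨C, hC, hbound⟩ := exists_forall_le_of_eventually_le
      (fun N => have := hprob N; prob_le_one) (by positivity) this
    exact ⟨_, lt_min (half_pos hc₁) hc₂, C, hC, fun N _ => hbound N⟩
  filter_upwards [eventually_ge_atTop 2,
    eventually_mul_sqrt_le_mul_rpow K (by positivity : 0 < c / 4) hδ,
    eventually_three_div_sqrt_rpow_pow_le α (half_pos hc₁) hδ] with N hN hK hcard
  have hN₀ : 0 < N := by omega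
  have hN₁ : (1 : ℝ) ≤ N := by exact_mod_cast hN₀
  obtain ⟨T, hT, hTcard⟩ := sphereN.exists_finset_overlap_net hN₀
    (rpow_pos_of_pos (by positivity) (-α)) (rpow_le_one_of_one_le_of_nonpos hN₁ (by linarith))
  have hsq : ((N : ℝ) ^ ((1 : ℝ) / 2 + δ)) ^ 2 = (N : ℝ) ^ ((1 : ℝ) + 2 * δ) := by
    rw [← rpow_natCast, ← rpow_mul (by positivity)]; ring_nf
  calc _ ≤ (T.card : ℝ≥0∞) * _ + _ :=
        measure_le_iSup_le_of_overlap_net hN₀ (hcont N) (hmeas N) (hiso N) (hnonneg N) hT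
          (b := c / 2 * (N : ℝ) ^ ((1 : ℝ) / 2 + δ)) (d := c ^ 2 / 4 * (N : ℝ) ^ ((1 : ℝ) + 2 * δ))
          (e := 3 / 4 * c * (N : ℝ) ^ ((1 : ℝ) / 2 + δ)) (by positivity)
          (by linarith [hmean N hN]) (by rw [← hsq]; nlinarith)
    _ ≤ T.card * ENNReal.ofReal (C₁ * exp (-c₁ * (N : ℝ) ^ ((1 : ℝ) + 2 * δ))) +
        ENNReal.ofReal (C₂ * exp (-c₂ * (N : ℝ) ^ ((1 : ℝ) + 2 * δ))) := by
      gcongr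
      exacts [hpoint N hN, hmodsq N hN]
    _ ≤ _ := natCast_mul_ofReal_add_ofReal_le (hTcard.trans hcard) hC₁.le hC₂.le (by positivity)
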